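/- arXiv:1806.09368 — 2 statements merged into one kernel-verified Lean document; each statement's English description precedes it below -/
import Mathlib

section
/- There exists a nonempty Π⁰₁ class of infinite binary sequences that contains no computable member. -/
/-- Partial functions recursive in an oracle `O : ℕ → ℕ` (oracle partial recursion). -/
inductive RecursiveInOracle (O : ℕ → ℕ) : (ℕ →. ℕ) → Prop
  | zero : RecursiveInOracle O (pure 0)
  | succ : RecursiveInOracle O Nat.succ
  | left : RecursiveInOracle O ↑fun n : ℕ => n.unpair.1
  | right : RecursiveInOracle O ↑fun n : ℕ => n.unpair.2
  | oracle : RecursiveInOracle O ↑O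
  | pair {f g} : RecursiveInOracle O f → RecursiveInOracle O g →
      RecursiveInOracle O fun n => Nat.pair <$> f n <*> g n
  | comp {f g} : RecursiveInOracle O f → RecursiveInOracle O g →
      RecursiveInOracle O fun n => g n >>= f
  | prec {f g} : RecursiveInOracle O f → RecursiveInOracle O g →
      RecursiveInOracle O (Nat.unpaired fun a n =>
        n.rec (f a) fun y IH => do let i ← IH; g (Nat.pair a (Nat.pair y i)))
  | rfind {f} : RecursiveInOracle O f →
      RecursiveInOracle O fun a => Nat.rfind fun n => (fun m => m = 0) <$> f (Nat.pair a n)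

/-- The oracle (characteristic function on `ℕ`) associated to a point of Cantor space. -/
def boolOracle (A : ℕ → Bool) : ℕ → ℕ := fun n => (A n).toNat

/-- Turing reducibility `A ≤ᵀ B` for points of Cantor space. -/
def TuringLE (A B : ℕ → Bool) : Prop :=
  RecursiveInOracle (boolOracle B) fun n => Part.some ((A n).toNat)

/-- Strict Turing reducibility `A <ᵀ B`. -/
def TuringLT (A B : ℕ → Bool) : Prop :=
  TuringLE A B ∧ ¬ TuringLE B A

/-- `A` is computable iff it is reducible to the empty oracle. -/
def ComputableSet (A : ℕ → Bool) : Prop :=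
  TuringLE A fun _ => false

/-- `P` is a `Π⁰₁` class: the set of infinite paths through a computable,
downward-closed set of finite binary strings. -/
def IsPi01Class (P : Set (ℕ → Bool)) : Prop :=
  ∃ T : List Bool → Bool, Computable T ∧
    (∀ σ τ : List Bool, σ <+: τ → T τ = true → T σ = true) ∧
    ∀ A : ℕ → Bool, A ∈ P ↔ ∀ n : ℕ, T ((List.range n).map A) = true

/-!
The witness is the class of diagonally noncomputable `{0,1}`-valued functions: those `A` with
`A e ≠ φₑ(e)` whenever `φₑ(e)` converges. It is `Π⁰₁`, because a finite string is kept in the tree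
as long as it disagrees with every `φₑ(e)` that has converged within `length` steps. It is
nonempty, since each `e` forbids at most one value. It has no computable member `A`, since an
index `e` of `A` gives `φₑ(e) = A e`.
-/

open Nat.Partrec Nat.Partrec.Code Denumerable

/-- `A e ≠ φₑ(e)`, with `φₑ(e)` read as `(ofNat Code e).eval e` and the bit `A e` as `0` or `1`. -/
def IsDNC (A : ℕ → Bool) : Prop :=
  ∀ e, (A e).toNat ∉ (ofNat Code e).eval e

def AvoidsDiagonal (σ : List Bool) : Prop :=
  ∀ e < σ.length, evaln σ.length (ofNat Code e) e ≠ some (σ.getD e false).toNat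

instance : DecidablePred AvoidsDiagonal := fun _ => by
  unfold AvoidsDiagonal; infer_instance

theorem primrecPred_avoidsDiagonal : PrimrecPred AvoidsDiagonal := by
  have hstep : PrimrecRel fun (e : ℕ) (σ : List Bool) =>
      evaln σ.length (ofNat Code e) e ≠ some (σ.getD e false).toNat :=
    .not <| Primrec.eq.comp
      (primrec_evaln.comp <| ((Primrec.list_length.comp .snd).pair
        ((Primrec.ofNat Code).comp .fst)).pair .fst)
      (Primrec.option_some.comp <| (Primrec.dom_bool Bool.toNat).comp <|
        (Primrec.list_getD false).comp .snd .fst)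
  exact (hstep.forall_mem_list.comp (Primrec.list_range.comp Primrec.list_length) .id).of_eq
    fun σ => by simp [AvoidsDiagonal]

theorem AvoidsDiagonal.of_prefix {σ τ : List Bool} (h : σ <+: τ) (hτ : AvoidsDiagonal τ) :
    AvoidsDiagonal σ := by
  intro e he hσ
  have hlen : σ.length ≤ τ.length := h.length_le
  have hget : τ.getD e false = σ.getD e false := by
    simp only [List.getD_eq_getElem?_getD, List.getElem?_eq_getElem he,
      List.getElem?_eq_getElem (he.trans_le hlen), h.getElem he]
  exact hτ e (he.trans_le hlen) (hget ▸ evaln_mono hlen hσ)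

theorem avoidsDiagonal_map_range_iff (A : ℕ → Bool) :
    (∀ n, AvoidsDiagonal ((List.range n).map A)) ↔ IsDNC A := by
  have hget {e n : ℕ} (he : e < n) : ((List.range n).map A).getD e false = A e := by
    simp [List.getD_eq_getElem?_getD, List.getElem?_range he]
  constructor
  · intro hA e hev
    obtain ⟨k, hk⟩ := evaln_complete.1 hev
    have hen : e < max k (e + 1) := by omega
    have := hA (max k (e + 1)) e (by simp [hen])
    simp only [List.length_map, List.length_range, hget hen] at this
    exact this (evaln_mono (le_max_left _ _) hk)
  · intro hA n e he hev
    simp only [List.length_map, List.length_range] at he hev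
    rw [hget he] at hev
    exact hA e (evaln_sound hev)

theorem isPi01Class_setOf_isDNC : IsPi01Class {A | IsDNC A} :=
  ⟨fun σ => decide (AvoidsDiagonal σ), primrecPred_avoidsDiagonal.decide.to_comp,
    fun _ _ h hτ => decide_eq_true (.of_prefix h (of_decide_eq_true hτ)),
    fun A => by simp [← avoidsDiagonal_map_range_iff]⟩

open scoped Classical in
theorem isDNC_decide_zero_mem : IsDNC fun e => decide (0 ∈ (ofNat Code e).eval e) := by
  intro e
  by_cases h0 : 0 ∈ (ofNat Code e).eval e
  · simp only [h0, decide_true, Bool.toNat_true]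
    exact fun h1 => one_ne_zero (Part.mem_unique h1 h0)
  · simp [h0]

theorem IsDNC.not_computable {A : ℕ → Bool} (hA : IsDNC A) : ¬Computable A := by
  intro hcomp
  obtain ⟨c, hc⟩ := exists_code.1 <|
    Partrec.nat_iff.1 ((Primrec.dom_bool Bool.toNat).to_comp.comp hcomp)
  have hdiag := hA (Encodable.encode c)
  rw [ofNat_encode, hc] at hdiag
  exact hdiag (Part.mem_some _)

/-- There exists a nonempty `Π⁰₁` class containing no computable member. -/
theorem exists_special_Pi01_class :
    ∃ P : Set (ℕ → Bool), IsPi01Class P ∧ P.Nonempty ∧ ∀ A ∈ P, ¬ Computable A :=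
  ⟨{A | IsDNC A}, isPi01Class_setOf_isDNC, ⟨_, isDNC_decide_zero_mem⟩,
    fun _ hA => hA.not_computable⟩
end

section
/- There exists a nonempty Π⁰₁ class P of infinite binary sequences containing no computable member such that no member of P is of minimal Turing degree; that is, for every A ∈ P there exists C : ℕ → Bool that is not computable, with C <_T A. -/
/-!
Take for `P` the joins `A = X ⊕ Y` in which `X` is a two-valued diagonally noncomputable
function and `Y` is diagonally noncomputable relative to `X`: for every `e`, the bit `X e`
differs from the output of the `e`-th machine on input `e`, and `Y e` differs from the output
of the `e`-th machine with oracle `X`. Such joins exist (choose each bit against the output),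
and these conditions are refuted at finite stages, so `P` is `Π⁰₁`. No `DNC` function is
computable from its oracle, hence `X` is not computable, and `A ≤ᵀ X` is impossible since it
would give `Y ≤ᵀ X`; thus `X` is a noncomputable degree strictly below that of `A`.

"The `e`-th oracle machine" makes sense because an oracle computation only ever reads a finite
initial segment of its oracle, so it is simulated by an ordinary code that receives that
segment as a list.
-/
open Filter Encodable Nat.Partrec.Code
open Nat.Partrec (Code)

def initSeg {α : Type*} (O : ℕ → α) (l : ℕ) : List α := (List.range l).map O

theorem initSeg_prefix {α : Type*} (O : ℕ → α) {l l' : ℕ} (h : l ≤ l') :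
    initSeg O l <+: initSeg O l' := by
  simpa [initSeg, List.take_range, Nat.min_eq_left h] using
    (List.take_prefix l (List.range l')).map O

theorem getElem?_initSeg {α : Type*} (O : ℕ → α) {l n : ℕ} (h : n < l) :
    (initSeg O l)[n]? = some (O n) := by
  simp [initSeg, h]

structure Approximates {α : Type*} (X : ℕ → Part α) (x : Part α) : Prop where
  mono : Monotone X
  mem_iff : ∀ y, y ∈ x ↔ ∀ᶠ l in atTop, y ∈ X l

namespace Approximates

variable {α β : Type} {X : ℕ → Part α} {x : Part α}

theorem const (x : Part α) : Approximates (fun _ => x) x :=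
  ⟨monotone_const, fun _ => eventually_const.symm⟩

theorem eventually_mem (h : Approximates X x) {y : α} {l : ℕ} (hy : y ∈ X l) :
    ∀ᶠ l' in atTop, y ∈ X l' :=
  eventually_atTop.2 ⟨l, fun _ hl' => h.mono hl' y hy⟩

theorem mem_of_mem (h : Approximates X x) {y : α} {l : ℕ} (hy : y ∈ X l) : y ∈ x :=
  (h.mem_iff y).2 (h.eventually_mem hy)

theorem bind {G : ℕ → α → Part β} {g : α → Part β} (hx : Approximates X x)
    (hg : ∀ a, Approximates (G · a) (g a)) :
    Approximates (fun l => X l >>= G l) (x >>= g) := by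
  refine ⟨fun l l' hl y hy => ?_, fun y => ?_⟩
  · obtain ⟨a, ha, hy⟩ := Part.mem_bind_iff.1 hy
    exact Part.mem_bind_iff.2 ⟨a, hx.mono hl a ha, (hg a).mono hl y hy⟩
  · simp only [Part.bind_eq_bind, Part.mem_bind_iff]
    constructor
    · rintro ⟨a, ha, hy⟩
      filter_upwards [(hx.mem_iff a).1 ha, ((hg a).mem_iff y).1 hy] with l ha hy
      exact ⟨a, ha, hy⟩
    · intro h
      obtain ⟨l, a, ha, hy⟩ := h.exists
      exact ⟨a, hx.mem_of_mem ha, (hg a).mem_of_mem hy⟩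

theorem map (f : α → β) (hx : Approximates X x) :
    Approximates (fun l => f <$> X l) (f <$> x) := by
  simpa only [← bind_pure_comp] using hx.bind fun a => const (pure (f a))

theorem seq {F : ℕ → Part (α → β)} {f : Part (α → β)} (hf : Approximates F f)
    (hx : Approximates X x) : Approximates (fun l => F l <*> X l) (f <*> x) := by
  simpa only [seq_eq_bind_map] using hf.bind fun h => hx.map h

theorem natRec {G : ℕ → ℕ → α → Part α} {g : ℕ → α → Part α} (hx : Approximates X x)
    (hg : ∀ k a, Approximates (G · k a) (g k a)) (m : ℕ) :
    Approximates (fun l => m.rec (X l) fun k IH => IH.bind (G l k))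
      (m.rec x fun k IH => IH.bind (g k)) := by
  induction m with
  | zero => exact hx
  | succ k ih => exact ih.bind (hg k)

theorem rfind {P : ℕ → ℕ →. Bool} {p : ℕ →. Bool} (hp : ∀ n, Approximates (P · n) (p n)) :
    Approximates (fun l => Nat.rfind (P l)) (Nat.rfind p) := by
  refine ⟨fun l l' hl y hy => ?_, fun y => ?_⟩
  · obtain ⟨hy, hlt⟩ := Nat.mem_rfind.1 hy
    exact Nat.mem_rfind.2 ⟨(hp y).mono hl _ hy, fun hm => (hp _).mono hl _ (hlt hm)⟩
  · simp only [Nat.mem_rfind]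
    constructor
    · rintro ⟨hy, hlt⟩
      have hlt' : ∀ᶠ l in atTop, ∀ m ∈ Set.Iio y, false ∈ P l m :=
        (eventually_all_finite (Set.finite_Iio y)).2 fun m hm => ((hp m).mem_iff _).1 (hlt hm)
      filter_upwards [((hp y).mem_iff _).1 hy, hlt'] with l hy hlt
      exact ⟨hy, fun hm => hlt _ hm⟩
    · intro h
      obtain ⟨l, hy, hlt⟩ := h.exists
      exact ⟨(hp y).mem_of_mem hy, fun hm => (hp _).mem_of_mem (hlt hm)⟩

end Approximates

def FiniteUse (O : ℕ → ℕ) (f : ℕ →. ℕ) : Prop :=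
  ∃ F : List ℕ → ℕ →. ℕ, Partrec₂ F ∧ ∀ n, Approximates (fun l => F (initSeg O l) n) (f n)

namespace FiniteUse

variable {O : ℕ → ℕ} {f g : ℕ →. ℕ}

theorem of_partrec (hf : Nat.Partrec f) : FiniteUse O f :=
  ⟨fun _ => f, (Partrec.nat_iff.2 hf).comp Computable.snd, fun n => .const (f n)⟩

theorem oracle : FiniteUse O O := by
  refine ⟨fun ρ n => ρ[n]?, (Computable.list_getElem?.comp Computable.fst Computable.snd).ofOption,
    fun n => ⟨fun l l' hl y hy => ?_, fun y => ?_⟩⟩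
  · obtain ⟨ρ, hρ⟩ := initSeg_prefix O hl
    simp only [← hρ, Part.mem_ofOption, Option.mem_def] at hy ⊢
    rw [List.getElem?_append_left (List.getElem?_eq_some_iff.1 hy).1, hy]
  · simp only [PFun.coe_val, Part.mem_some_iff, Part.mem_ofOption, Option.mem_def]
    constructor
    · rintro rfl
      filter_upwards [eventually_gt_atTop n] with l hl
      exact getElem?_initSeg O hl
    · intro h
      obtain ⟨l, hl⟩ := h.exists
      obtain ⟨hn, rfl⟩ := List.getElem?_eq_some_iff.1 hl
      simp [initSeg]

theorem pair (hf : FiniteUse O f) (hg : FiniteUse O g) :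
    FiniteUse O fun n => Nat.pair <$> f n <*> g n := by
  obtain ⟨F, hF, hFf⟩ := hf
  obtain ⟨G, hG, hGg⟩ := hg
  refine ⟨fun ρ n => Nat.pair <$> F ρ n <*> G ρ n, ?_, fun n => ((hFf n).map _).seq (hGg n)⟩
  have : Partrec₂ fun ρ n => (F ρ n).bind fun a => (G ρ n).map (Nat.pair a) :=
    hF.bind ((hG.comp (Computable.fst.comp Computable.fst) (Computable.snd.comp Computable.fst)).map
      (Primrec₂.natPair.comp (Primrec.snd.comp Primrec.fst) Primrec.snd).to_comp.to₂).to₂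
  refine this.of_eq fun p => ?_
  simp [seq_eq_bind_map, Part.bind_map]

theorem comp (hf : FiniteUse O f) (hg : FiniteUse O g) : FiniteUse O fun n => g n >>= f := by
  obtain ⟨F, hF, hFf⟩ := hf
  obtain ⟨G, hG, hGg⟩ := hg
  exact ⟨fun ρ n => G ρ n >>= F ρ,
    hG.bind (hF.comp (Computable.fst.comp Computable.fst) Computable.snd).to₂,
    fun n => (hGg n).bind hFf⟩

theorem prec (hf : FiniteUse O f) (hg : FiniteUse O g) :
    FiniteUse O (Nat.unpaired fun a n =>
      n.rec (f a) fun y IH => do let i ← IH; g (Nat.pair a (Nat.pair y i))) := by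
  obtain ⟨F, hF, hFf⟩ := hf
  obtain ⟨G, hG, hGg⟩ := hg
  refine ⟨fun ρ x => x.unpair.2.rec (F ρ x.unpair.1)
      fun y IH => IH.bind fun i => G ρ (Nat.pair x.unpair.1 (Nat.pair y i)), ?_,
    fun x => (hFf _).natRec (fun k i => hGg _) _⟩
  have hpair : Computable fun q : (List ℕ × ℕ) × ℕ × ℕ =>
      Nat.pair q.1.2.unpair.1 (Nat.pair q.2.1 q.2.2) :=
    (Primrec₂.natPair.comp ((Primrec.fst.comp Primrec.unpair).comp (Primrec.snd.comp Primrec.fst))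
      (Primrec₂.natPair.comp (Primrec.fst.comp Primrec.snd)
        (Primrec.snd.comp Primrec.snd))).to_comp
  exact Partrec.nat_rec
    ((Primrec.snd.comp Primrec.unpair).comp Primrec.snd).to_comp
    (hF.comp Computable.fst ((Primrec.fst.comp Primrec.unpair).comp Primrec.snd).to_comp)
    (hG.comp (Computable.fst.comp Computable.fst) hpair).to₂

theorem rfind (hf : FiniteUse O f) :
    FiniteUse O fun a => Nat.rfind fun n => (fun m => m = 0) <$> f (Nat.pair a n) := by
  obtain ⟨F, hF, hFf⟩ := hf
  refine ⟨fun ρ a => Nat.rfind fun n => (fun m => decide (m = 0)) <$> F ρ (Nat.pair a n), ?_,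
    fun a => .rfind fun n => (hFf _).map _⟩
  refine Partrec.rfind ?_
  exact (hF.comp (Computable.fst.comp Computable.fst)
    (Primrec₂.natPair.comp (Primrec.snd.comp Primrec.fst) Primrec.snd).to_comp).map
    ((Primrec.eq.comp Primrec.snd (Primrec.const 0)).decide.to_comp.to₂)

end FiniteUse

theorem RecursiveInOracle.finiteUse {O : ℕ → ℕ} {f : ℕ →. ℕ} (h : RecursiveInOracle O f) :
    FiniteUse O f := by
  induction h with
  | zero => exact .of_partrec .zero
  | succ => exact .of_partrec .succ
  | left => exact .of_partrec .left
  | right => exact .of_partrec .right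
  | oracle => exact .oracle
  | pair _ _ hf hg => exact hf.pair hg
  | comp _ _ hf hg => exact hf.comp hg
  | prec _ _ hf hg => exact hf.prec hg
  | rfind _ hf => exact hf.rfind

theorem FiniteUse.exists_code {O : ℕ → ℕ} {f : ℕ →. ℕ} (h : FiniteUse O f) :
    ∃ c : Code, ∀ n, Approximates (fun l => eval c (Nat.pair (encode (initSeg O l)) n)) (f n) := by
  obtain ⟨F, hF, hFf⟩ := h
  have hdecode : Partrec fun x : ℕ => F ((decode (α := List ℕ) x.unpair.1).getD []) x.unpair.2 :=
    hF.comp (Computable.decode.option_getD (Computable.const []) |>.comp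
      (Primrec.fst.comp Primrec.unpair).to_comp) (Primrec.snd.comp Primrec.unpair).to_comp
  obtain ⟨c, hc⟩ := Nat.Partrec.Code.exists_code.1 (Partrec.nat_iff.1 hdecode)
  exact ⟨c, fun n => by simpa [hc] using hFf n⟩

/-- Stage `p` runs `c` for `p.unpair.1` steps with the first `p.unpair.2` oracle values. -/
def stageOutput (O : ℕ → ℕ) (c : Code) (n p : ℕ) : Option ℕ :=
  evaln p.unpair.1 c (Nat.pair (encode (initSeg O p.unpair.2)) n)

/-- A code need not give the same output on different oracle segments; the output of the first
convergent stage is a canonical choice, and it is the true value when the code simulates an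
oracle computation (`exists_firstOutput_eq`). -/
def firstOutput (O : ℕ → ℕ) (c : Code) (n t : ℕ) : Option ℕ :=
  (List.range t).findSome? (stageOutput O c n)

section firstOutput

variable {O O' : ℕ → ℕ} {c : Code} {n t : ℕ}

theorem firstOutput_mono {t' v : ℕ} (h : firstOutput O c n t = some v) (ht : t ≤ t') :
    firstOutput O c n t' = some v := by
  obtain ⟨k, rfl⟩ := Nat.exists_eq_add_of_le ht
  simp_all [firstOutput, List.range_add]

theorem firstOutput_congr (h : ∀ m < t, O m = O' m) :
    firstOutput O c n t = firstOutput O' c n t := by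
  have hstage : ∀ p ∈ List.range t, stageOutput O c n p = stageOutput O' c n p := by
    intro p hp
    have hseg : initSeg O p.unpair.2 = initSeg O' p.unpair.2 :=
      List.map_congr_left fun m hm => h m <| by
        have := Nat.unpair_right_le p
        simp only [List.mem_range] at hm hp
        omega
    simp only [stageOutput, hseg]
  simpa [firstOutput, List.findSome?_map, Function.comp_def] using
    congrArg (List.findSome? id) (List.map_congr_left hstage)

theorem exists_firstOutput_eq {y : ℕ}
    (hc : Approximates (fun l => eval c (Nat.pair (encode (initSeg O l)) n)) (Part.some y)) :
    ∃ t, firstOutput O c n t = some y := by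
  obtain ⟨l, hl⟩ := ((hc.mem_iff y).1 (Part.mem_some y)).exists
  obtain ⟨k, hk⟩ := evaln_complete.1 hl
  have hsome : (firstOutput O c n (Nat.pair k l + 1)).isSome :=
    List.findSome?_isSome_iff.2
      ⟨Nat.pair k l, List.self_mem_range_succ, by simp [stageOutput, Option.mem_def.1 hk]⟩
  obtain ⟨v, hv⟩ := Option.isSome_iff_exists.1 hsome
  obtain ⟨p, -, hp⟩ := List.exists_of_findSome?_eq_some hv
  have hv' : v ∈ Part.some y := hc.mem_of_mem (evaln_sound hp)
  exact ⟨_, hv.trans (congrArg some (Part.mem_some_iff.1 hv'))⟩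

end firstOutput

theorem primrec_firstOutput {α : Type*} [Primcodable α] {O : α → ℕ → ℕ} {c : α → Code}
    {n t : α → ℕ} (hO : Primrec₂ O) (hc : Primrec c) (hn : Primrec n) (ht : Primrec t) :
    Primrec fun a => firstOutput (O a) (c a) (n a) (t a) := by
  have hseg : Primrec₂ fun a p => initSeg (O a) (Nat.unpair p).2 :=
    Primrec.list_map (Primrec.list_range.comp ((Primrec.snd.comp Primrec.unpair).comp Primrec.snd))
      (hO.comp (Primrec.fst.comp Primrec.fst) Primrec.snd)
  have hstage : Primrec₂ fun a p => stageOutput (O a) (c a) (n a) p :=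
    primrec_evaln.comp (((Primrec.fst.comp Primrec.unpair).comp Primrec.snd).pair
      (hc.comp Primrec.fst) |>.pair (Primrec₂.natPair.comp (Primrec.encode.comp hseg)
        (hn.comp Primrec.fst)))
  simpa [firstOutput, ← List.head?_filterMap] using
    Primrec.list_head?.comp (Primrec.listFilterMap (Primrec.list_range.comp ht) hstage)

def DNC (B D : ℕ → Bool) : Prop :=
  ∀ e t, firstOutput (boolOracle B) (Denumerable.ofNat Code e) e t ≠ some (D e).toNat

def DNCBelow (B D : ℕ → Bool) (t : ℕ) : Prop :=
  ∀ e < t, firstOutput (boolOracle B) (Denumerable.ofNat Code e) e t ≠ some (D e).toNat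

section DNC

variable {B D : ℕ → Bool}

theorem DNC.not_turingLE (h : DNC B D) : ¬ TuringLE D B := by
  intro hDB
  obtain ⟨c, hc⟩ := (RecursiveInOracle.finiteUse hDB).exists_code
  obtain ⟨t, ht⟩ := exists_firstOutput_eq (hc (encode c))
  exact h (encode c) t (by simpa using ht)

theorem exists_dnc (B : ℕ → Bool) : ∃ D, DNC B D := by
  classical
  let outputsZero e := ∃ t, firstOutput (boolOracle B) (Denumerable.ofNat Code e) e t = some 0
  refine ⟨fun e => decide (outputsZero e), fun e t ht => ?_⟩
  by_cases h0 : outputsZero e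
  · simp only [decide_eq_true h0, Bool.toNat_true] at ht
    obtain ⟨t', ht'⟩ := h0
    have := (firstOutput_mono ht (le_max_left t t')).symm.trans
      (firstOutput_mono ht' (le_max_right t t'))
    simp at this
  · simp only [decide_eq_false h0, Bool.toNat_false] at ht
    exact h0 ⟨t, ht⟩

theorem dnc_iff_forall_dncBelow : DNC B D ↔ ∀ t, DNCBelow B D t :=
  ⟨fun h t e _ => h e t, fun h e t ht =>
    h (max t (e + 1)) e (by omega) (firstOutput_mono ht (le_max_left _ _))⟩

theorem dncBelow_antitone : Antitone (DNCBelow B D) :=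
  fun _ _ htt' h e he ht => h e (he.trans_le htt') (firstOutput_mono ht htt')

theorem DNCBelow.congr {B' D' : ℕ → Bool} {t : ℕ} (hB : ∀ n < t, B n = B' n)
    (hD : ∀ n < t, D n = D' n) (h : DNCBelow B D t) : DNCBelow B' D' t := by
  have hO : ∀ m < t, boolOracle B m = boolOracle B' m := fun m hm => by simp [boolOracle, hB m hm]
  intro e he
  rw [← hD e he, ← firstOutput_congr hO]
  exact h e he

theorem primrecPred_dncBelow {α : Type*} [Primcodable α] {B D : α → ℕ → Bool} {t : α → ℕ}
    (hB : Primrec₂ B) (hD : Primrec₂ D) (ht : Primrec t) :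
    PrimrecPred fun a => DNCBelow (B a) (D a) (t a) := by
  have hdiag : PrimrecRel fun (e : ℕ) (a : α) =>
      firstOutput (boolOracle (B a)) (Denumerable.ofNat Code e) e (t a) ≠ some (D a e).toNat :=
    (Primrec.eq.comp (primrec_firstOutput
        ((Primrec.dom_bool Bool.toNat).comp
          (hB.comp (Primrec.snd.comp Primrec.fst) Primrec.snd)).to₂
        ((Primrec.ofNat Code).comp Primrec.fst) Primrec.fst (ht.comp Primrec.snd))
      (Primrec.option_some.comp ((Primrec.dom_bool Bool.toNat).comp
        (hD.comp Primrec.snd Primrec.fst)))).not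
  exact (hdiag.forall_mem_list.comp (Primrec.list_range.comp ht) Primrec.id).of_eq
    fun a => by simp [DNCBelow]

end DNC

theorem getD_initSeg {α : Type*} (O : ℕ → α) {l n : ℕ} (h : n < l) (d : α) :
    (initSeg O l).getD n d = O n := by
  simp [List.getD_eq_getElem?_getD, getElem?_initSeg O h]

theorem isPi01Class_setOf_forall {R : (ℕ → Bool) → ℕ → Prop}
    (hR : PrimrecPred fun σ : List Bool => R (σ.getD · false) σ.length)
    (hanti : ∀ A, Antitone (R A)) (hcongr : ∀ A A' t, (∀ n < t, A n = A' n) → R A t → R A' t) :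
    IsPi01Class {A | ∀ t, R A t} := by
  classical
  refine ⟨fun σ => decide (R (σ.getD · false) σ.length), hR.decide.to_comp,
    fun σ τ hστ hτ => ?_, fun A => forall_congr' fun t => ?_⟩
  · simp only [decide_eq_true_eq] at hτ ⊢
    refine hcongr _ _ _ (fun n hn => ?_) (hanti _ hστ.length_le hτ)
    simp [List.getD_eq_getElem?_getD, List.getElem?_eq_getElem hn,
      List.getElem?_eq_getElem (hn.trans_le hστ.length_le), hστ.getElem hn]
  · have hlen : ((List.range t).map A).length = t := by simp
    simp only [decide_eq_true_eq, hlen]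
    exact ⟨hcongr _ _ _ fun n hn => (getD_initSeg A hn false).symm,
      hcongr _ _ _ fun n hn => getD_initSeg A hn false⟩

def evenPart (A : ℕ → Bool) (n : ℕ) : Bool := A (2 * n)

def oddPart (A : ℕ → Bool) (n : ℕ) : Bool := A (2 * n + 1)

def interleave (X Y : ℕ → Bool) (n : ℕ) : Bool := if n % 2 = 0 then X (n / 2) else Y (n / 2)

@[simp] theorem evenPart_interleave (X Y : ℕ → Bool) : evenPart (interleave X Y) = X := by
  ext n; simp [evenPart, interleave]

@[simp] theorem oddPart_interleave (X Y : ℕ → Bool) : oddPart (interleave X Y) = Y := by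
  ext n; simp [oddPart, interleave, Nat.add_mod, show (2 * n + 1) / 2 = n by omega]

def dncJoinClass : Set (ℕ → Bool) :=
  {A | DNC (fun _ => false) (evenPart A) ∧ DNC (evenPart A) (oddPart A)}

theorem dncJoinClass_nonempty : dncJoinClass.Nonempty := by
  obtain ⟨X, hX⟩ := exists_dnc fun _ => false
  obtain ⟨Y, hY⟩ := exists_dnc X
  exact ⟨interleave X Y, by simpa [dncJoinClass] using ⟨hX, hY⟩⟩

theorem isPi01Class_dncJoinClass : IsPi01Class dncJoinClass := by
  have hclass : dncJoinClass = {A | ∀ t, DNCBelow (fun _ => false) (evenPart A) (t / 2) ∧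
      DNCBelow (evenPart A) (oddPart A) (t / 2)} := by
    ext A
    simp only [dncJoinClass, Set.mem_ofPred_eq, dnc_iff_forall_dncBelow, ← forall_and]
    exact ⟨fun h t => h (t / 2), fun h t => by simpa using h (2 * t)⟩
  rw [hclass]
  refine isPi01Class_setOf_forall ?_ (fun A t t' htt' h => ?_) (fun A A' t hA h => ?_)
  · have heven : Primrec₂ fun (σ : List Bool) n => σ.getD (2 * n) false :=
      (Primrec.list_getD false).comp Primrec.fst
        (Primrec.nat_mul.comp (Primrec.const 2) Primrec.snd)
    have hodd : Primrec₂ fun (σ : List Bool) n => σ.getD (2 * n + 1) false :=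
      (Primrec.list_getD false).comp Primrec.fst (Primrec.succ.comp
        (Primrec.nat_mul.comp (Primrec.const 2) Primrec.snd))
    have hhalf : Primrec fun σ : List Bool => σ.length / 2 :=
      Primrec.nat_div.comp Primrec.list_length (Primrec.const 2)
    exact (primrecPred_dncBelow (Primrec.const false).to₂ heven hhalf).and
      (primrecPred_dncBelow heven hodd hhalf)
  · have hdiv := Nat.div_le_div_right (c := 2) htt'
    exact ⟨dncBelow_antitone hdiv h.1, dncBelow_antitone hdiv h.2⟩
  · have heven : ∀ n < t / 2, evenPart A n = evenPart A' n := fun n hn => hA _ (by omega)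
    exact ⟨h.1.congr (fun _ _ => rfl) heven,
      h.2.congr heven fun n hn => hA _ (by omega)⟩

theorem RecursiveInOracle.of_partrec {O : ℕ → ℕ} {f : ℕ →. ℕ} (h : Nat.Partrec f) :
    RecursiveInOracle O f := by
  induction h with
  | zero => exact .zero
  | succ => exact .succ
  | left => exact .left
  | right => exact .right
  | pair _ _ ihf ihg => exact .pair ihf ihg
  | comp _ _ ihf ihg => exact .comp ihf ihg
  | prec _ _ ihf ihg => exact .prec ihf ihg
  | rfind _ ih => exact .rfind ih

theorem TuringLE.refl (A : ℕ → Bool) : TuringLE A A := RecursiveInOracle.oracle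

theorem TuringLE.comp_computable {A B : ℕ → Bool} (h : TuringLE A B) {g : ℕ → ℕ}
    (hg : Computable g) : TuringLE (fun n => A (g n)) B := by
  unfold TuringLE at h ⊢
  simpa [Part.bind_some] using RecursiveInOracle.comp h (.of_partrec (Partrec.nat_iff.1 hg))

theorem TuringLE.evenPart {A B : ℕ → Bool} (h : TuringLE A B) : TuringLE (evenPart A) B :=
  h.comp_computable (Primrec.nat_mul.comp (Primrec.const 2) Primrec.id).to_comp

theorem TuringLE.oddPart {A B : ℕ → Bool} (h : TuringLE A B) : TuringLE (oddPart A) B :=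
  h.comp_computable (Primrec.succ.comp (Primrec.nat_mul.comp (Primrec.const 2) Primrec.id)).to_comp

/-- There is a nonempty special `Π⁰₁` class no member of which is of minimal degree. -/
theorem exists_special_Pi01_class_no_minimal_member :
    ∃ P : Set (ℕ → Bool), IsPi01Class P ∧ P.Nonempty ∧
      (∀ A ∈ P, ¬ ComputableSet A) ∧
      (∀ A ∈ P, ∃ C : ℕ → Bool, ¬ ComputableSet C ∧ TuringLT C A) := by
  refine ⟨dncJoinClass, isPi01Class_dncJoinClass, dncJoinClass_nonempty,
    fun A hA hA0 => hA.1.not_turingLE (TuringLE.evenPart hA0),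
    fun A hA => ⟨evenPart A, hA.1.not_turingLE, (TuringLE.refl A).evenPart,
      fun hAC => hA.2.not_turingLE hAC.oddPart⟩⟩
end
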